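/- A linear form α = Σ_i a_i e_i^* on ℝ^∞ is strictly negative on all nonzero elements of every cone in the family consisting of Chen cones, their faces, and the transverse cones to their faces, if and only if a_i < a_{i+1} < 0 for all i ≥ 1. -/

import Mathlib

/-!
Write `α x = ∑ i, a i * x i` (indices from `0`) and let `prefixVec k m = e₀ + ⋯ + e_{m-1}`, so that
the Chen generators are `vᵢ = prefixVec k (i + 1)`, `⟪prefixVec m, prefixVec n⟫ = min m n` and
`α (prefixVec m) = a₀ + ⋯ + a_{m-1}`. If all `aᵢ < 0`, then `α` is negative on every generator,
hence on the nonzero points of the cone and of its faces.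

A face is spanned by the generators it contains, so its transverse cone is generated by the
projections of the remaining generators `vⱼ` off the span of a set of prefix vectors. Let `lo` and
`hi` be the cuts of that set nearest to `j + 1` from below and above. Then the projection of `vⱼ`
is, up to the factor `hi - lo > 0`, the vector
`(hi - j - 1) (e_lo + ⋯ + eⱼ) - (j + 1 - lo) (e_{j+1} + ⋯ + e_{hi-1})`, on which `α` is the sum of
`a s - a t` over `lo ≤ s ≤ j < t < hi`, negative when `a` is increasing (without an upper cut it is
`e_lo + ⋯ + eⱼ`).

Conversely `eᵢ` lies in the transverse cone of `⟨v₀, …, v_{i-1}⟩` in `ℝ^{i+1}`, and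
`(eᵢ - e_{i+1}) / 2` in that of `⟨vₜ : t ≠ i⟩` in `ℝ^{i+2}`, which forces `aᵢ < 0` and
`aᵢ < a_{i+1}`.
-/

open Finset

/-- The closed convex polyhedral cone generated by vectors `v 0, …, v (n-1)`. -/
def polyCone {V : Type*} [AddCommGroup V] [Module ℝ V] {n : ℕ} (v : Fin n → V) : Set V :=
  {x | ∃ c : Fin n → ℝ, (∀ i, 0 ≤ c i) ∧ x = ∑ i, c i • v i}

/-- `F` is a face of the cone `C` (cut out by a supporting linear functional). -/
def IsFace {V : Type*} [AddCommGroup V] [Module ℝ V] (C F : Set V) : Prop :=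
  ∃ ℓ : V →ₗ[ℝ] ℝ, (∀ x ∈ C, ℓ x ≤ 0) ∧ F = {x ∈ C | ℓ x = 0}

/-- The transverse cone `t(C,F)` in `ℝ^k`. -/
noncomputable def tCone {k : ℕ} (C F : Set (EuclideanSpace ℝ (Fin k))) :
    Set (EuclideanSpace ℝ (Fin k)) :=
  (fun x => (Submodule.orthogonalProjection (Submodule.span ℝ F)ᗮ x : EuclideanSpace ℝ (Fin k))) '' C

/-- The generators `vᵢ = e₁ + ⋯ + eᵢ` of the Chen cone in `ℝ^k`. -/
noncomputable def chenGen (k : ℕ) (i : Fin k) : EuclideanSpace ℝ (Fin k) :=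
  ∑ j ∈ Finset.univ.filter (fun j : Fin k => (j : ℕ) ≤ (i : ℕ)),
    EuclideanSpace.single j (1 : ℝ)

/-- The Chen cone `⟨v₁, …, v_k⟩` in `ℝ^k`. -/
noncomputable def chenCone (k : ℕ) : Set (EuclideanSpace ℝ (Fin k)) :=
  polyCone (chenGen k)

/-- The family consisting of the faces of the Chen cone (including the cone itself) and
the transverse cones to its faces. -/
noncomputable def chenFamily (k : ℕ) : Set (Set (EuclideanSpace ℝ (Fin k))) :=
  {F | IsFace (chenCone k) F} ∪
    {T | ∃ F, IsFace (chenCone k) F ∧ T = tCone (chenCone k) F}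

section PolyCone

variable {V W : Type*} [AddCommGroup V] [Module ℝ V] [AddCommGroup W] [Module ℝ W]
  {n : ℕ} {v : Fin n → V}

lemma generator_mem_polyCone (i : Fin n) : v i ∈ polyCone v :=
  ⟨Pi.single i 1, fun j => by by_cases h : j = i <;> simp [h], by simp [Pi.single_apply]⟩

lemma map_nonpos_of_mem_polyCone {ℓ : V →ₗ[ℝ] ℝ} (hℓ : ∀ i, ℓ (v i) ≤ 0) {x : V}
    (hx : x ∈ polyCone v) : ℓ x ≤ 0 := by
  obtain ⟨c, hc, rfl⟩ := hx
  simpa using Finset.sum_nonpos fun i _ => mul_nonpos_of_nonneg_of_nonpos (hc i) (hℓ i)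

lemma isFace_polyCone_of_nonpos {ℓ : V →ₗ[ℝ] ℝ} (hℓ : ∀ i, ℓ (v i) ≤ 0) :
    IsFace (polyCone v) {x ∈ polyCone v | ℓ x = 0} :=
  ⟨ℓ, fun _ => map_nonpos_of_mem_polyCone hℓ, rfl⟩

lemma span_face_polyCone {ℓ : V →ₗ[ℝ] ℝ} (hℓ : ∀ x ∈ polyCone v, ℓ x ≤ 0) :
    Submodule.span ℝ {x ∈ polyCone v | ℓ x = 0} =
      Submodule.span ℝ (v '' {i | ℓ (v i) = 0}) := by
  apply le_antisymm
  · rw [Submodule.span_le]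
    rintro _ ⟨⟨c, hc, rfl⟩, hzero⟩
    have hterms : ∀ i, c i * ℓ (v i) = 0 := by
      simp only [map_sum, map_smul, smul_eq_mul] at hzero
      exact fun i => (Finset.sum_eq_zero_iff_of_nonpos fun i _ =>
        mul_nonpos_of_nonneg_of_nonpos (hc i) (hℓ _ (generator_mem_polyCone i))).1 hzero i
        (Finset.mem_univ i)
    refine Submodule.sum_mem _ fun i _ => ?_
    rcases mul_eq_zero.1 (hterms i) with h | h
    · simp [h]
    · exact Submodule.smul_mem _ _ (Submodule.subset_span ⟨i, h, rfl⟩)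
  · exact Submodule.span_mono (by
      rintro _ ⟨i, hi, rfl⟩
      exact ⟨generator_mem_polyCone i, hi⟩)

lemma map_neg_of_mem_polyCone {φ : V →ₗ[ℝ] W} {α : W →ₗ[ℝ] ℝ}
    (hgen : ∀ i, φ (v i) = 0 ∨ α (φ (v i)) < 0) {x : V} (hx : x ∈ polyCone v)
    (hx0 : φ x ≠ 0) : α (φ x) < 0 := by
  obtain ⟨c, hc, rfl⟩ := hx
  have hterm : ∀ i, c i * α (φ (v i)) ≤ 0 := fun i =>
    mul_nonpos_of_nonneg_of_nonpos (hc i) ((hgen i).elim (fun h => by simp [h]) le_of_lt)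
  simp only [map_sum, map_smul, smul_eq_mul] at hx0 ⊢
  refine (Finset.sum_nonpos fun i _ => hterm i).lt_of_ne fun hsum => hx0 ?_
  refine Finset.sum_eq_zero fun i _ => ?_
  have := (Finset.sum_eq_zero_iff_of_nonpos fun i _ => hterm i).1 hsum i (Finset.mem_univ i)
  rcases hgen i with h | h
  · simp [h]
  · simp [(mul_eq_zero.1 this).resolve_right h.ne]

end PolyCone

section OrthogonalProjection

variable {E : Type*} [NormedAddCommGroup E] [InnerProductSpace ℝ E]

lemma mem_orthogonal_span_of {s : Set E} {u : E} (h : ∀ w ∈ s, inner ℝ w u = 0) :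
    u ∈ (Submodule.span ℝ s)ᗮ := by
  have : Submodule.span ℝ s ≤ (ℝ ∙ u)ᗮ := Submodule.span_le.2 fun w hw =>
    Submodule.mem_orthogonal_singleton_iff_inner_right.2 (inner_eq_zero_symm.1 (h w hw))
  exact (Submodule.mem_orthogonal _ u).2 fun w hw =>
    inner_eq_zero_symm.1 (Submodule.mem_orthogonal_singleton_iff_inner_right.1 (this hw))

lemma starProjection_orthogonal_eq_of {K : Submodule ℝ E} [Kᗮ.HasOrthogonalProjection]
    {v u : E} (hu : u ∈ Kᗮ) (hvu : v - u ∈ K) : Kᗮ.starProjection v = u :=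
  Submodule.eq_starProjection_of_mem_orthogonal hu (K.le_orthogonal_orthogonal hvu)

end OrthogonalProjection

lemma mem_tCone_of {k : ℕ} {C F : Set (EuclideanSpace ℝ (Fin k))} {y u : EuclideanSpace ℝ (Fin k)}
    (hy : y ∈ C) (hu : u ∈ (Submodule.span ℝ F)ᗮ) (hyu : y - u ∈ Submodule.span ℝ F) :
    u ∈ tCone C F :=
  ⟨y, hy, starProjection_orthogonal_eq_of hu hyu⟩

section Prefix

variable {k : ℕ}

noncomputable def prefixVec (k m : ℕ) : EuclideanSpace ℝ (Fin k) :=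
  WithLp.toLp 2 fun s => if (s : ℕ) < m then 1 else 0

noncomputable def coordForm (a : ℕ → ℝ) (k : ℕ) : EuclideanSpace ℝ (Fin k) →ₗ[ℝ] ℝ :=
  ∑ i : Fin k, a i • (EuclideanSpace.proj i : EuclideanSpace ℝ (Fin k) →L[ℝ] ℝ).toLinearMap

@[simp] lemma prefixVec_apply (m : ℕ) (s : Fin k) :
    prefixVec k m s = if (s : ℕ) < m then 1 else 0 := rfl

@[simp] lemma coordForm_apply (a : ℕ → ℝ) (x : EuclideanSpace ℝ (Fin k)) :
    coordForm a k x = ∑ i : Fin k, a i * x i := by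
  simp [coordForm]

lemma coordForm_single (a : ℕ → ℝ) (i : Fin k) (c : ℝ) :
    coordForm a k (EuclideanSpace.single i c) = a i * c := by
  simp [PiLp.single_apply]

lemma prefixVec_zero : prefixVec k 0 = 0 := by
  ext s; simp

lemma chenGen_eq_prefixVec (i : Fin k) : chenGen k i = prefixVec k (i + 1) := by
  ext s
  simp [chenGen]

lemma sum_ite_lt_eq_sum_range {R : Type*} [AddCommMonoid R] {m : ℕ} (hm : m ≤ k) (f : ℕ → R) :
    ∑ s : Fin k, (if (s : ℕ) < m then f s else 0) = ∑ s ∈ range m, f s := by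
  rw [Fin.sum_univ_eq_sum_range (fun s => if s < m then f s else 0), ← Finset.sum_filter]
  congr 1
  ext s; simp only [mem_filter, mem_range]; omega

lemma prefixVec_mem_chenCone {m : ℕ} (hm : m ≤ k) : prefixVec k m ∈ chenCone k := by
  rcases m with _ | i
  · rw [prefixVec_zero]; exact ⟨0, fun _ => le_rfl, by simp⟩
  · have h := generator_mem_polyCone (v := chenGen k) ⟨i, hm⟩
    rwa [chenGen_eq_prefixVec] at h

lemma inner_prefixVec {m : ℕ} (hm : m ≤ k) (n : ℕ) :
    inner ℝ (prefixVec k m) (prefixVec k n) = (min m n : ℕ) := by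
  have h := sum_ite_lt_eq_sum_range (min_le_of_left_le hm : min m n ≤ k) (fun _ => (1 : ℝ))
  simp only [sum_const, card_range, nsmul_eq_mul, mul_one, lt_min_iff] at h
  rw [← h]
  simp only [PiLp.inner_apply, prefixVec_apply, RCLike.inner_apply, conj_trivial]
  exact sum_congr rfl fun s _ => by split_ifs <;> simp_all

lemma coordForm_prefixVec (a : ℕ → ℝ) {m : ℕ} (hm : m ≤ k) :
    coordForm a k (prefixVec k m) = ∑ s ∈ range m, a s := by
  rw [← sum_ite_lt_eq_sum_range hm]
  simp

end Prefix

section Gap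

variable {k : ℕ}

lemma coordForm_prefixVec_sub (a : ℕ → ℝ) {m n : ℕ} (hmn : m ≤ n) (hn : n ≤ k) :
    coordForm a k (prefixVec k n - prefixVec k m) = ∑ s ∈ Ico m n, a s := by
  rw [map_sub, coordForm_prefixVec a hn, coordForm_prefixVec a (hmn.trans hn),
    sum_Ico_eq_sub _ hmn]

lemma inner_prefixVec_sub_of_le {m lo n : ℕ} (hm : m ≤ k) (hmlo : m ≤ lo) (hlon : lo ≤ n) :
    inner ℝ (prefixVec k m) (prefixVec k n - prefixVec k lo) = 0 := by
  rw [inner_sub_right, inner_prefixVec hm, inner_prefixVec hm, min_eq_left hmlo,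
    min_eq_left (hmlo.trans hlon), sub_self]

/-- `hi - lo` times the projection of `prefixVec k n` orthogonal to all `prefixVec k m` with
`m ≤ lo` or `hi ≤ m`. -/
noncomputable def gapVec (k lo n hi : ℕ) : EuclideanSpace ℝ (Fin k) :=
  ((hi : ℝ) - n) • (prefixVec k n - prefixVec k lo) -
    ((n : ℝ) - lo) • (prefixVec k hi - prefixVec k n)

variable {lo n hi : ℕ}

lemma inner_prefixVec_gapVec {m : ℕ} (hm : m ≤ k) (hlon : lo ≤ n) (hnhi : n ≤ hi)
    (hmgap : m ≤ lo ∨ hi ≤ m) : inner ℝ (prefixVec k m) (gapVec k lo n hi) = 0 := by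
  simp only [gapVec, inner_sub_right, inner_smul_right, inner_prefixVec hm]
  rcases hmgap with h | h
  · rw [min_eq_left h, min_eq_left (h.trans hlon), min_eq_left (h.trans (hlon.trans hnhi))]
    ring
  · rw [min_eq_right h, min_eq_right (hnhi.trans h), min_eq_right ((hlon.trans hnhi).trans h)]
    ring

lemma smul_prefixVec_sub_gapVec :
    ((hi : ℝ) - lo) • prefixVec k n - gapVec k lo n hi =
      ((hi : ℝ) - n) • prefixVec k lo + ((n : ℝ) - lo) • prefixVec k hi := by
  simp only [gapVec]
  module

lemma coordForm_gapVec_neg {a : ℕ → ℝ} (ha : StrictMono a) (hlon : lo < n) (hnhi : n < hi)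
    (hk : hi ≤ k) : coordForm a k (gapVec k lo n hi) < 0 := by
  have hcard : ∀ {p q : ℕ}, p ≤ q → ((#(Ico p q) : ℕ) : ℝ) = q - p := fun h => by
    rw [Nat.card_Ico, Nat.cast_sub h]
  have hdouble : coordForm a k (gapVec k lo n hi) =
      ∑ s ∈ Ico lo n, ∑ t ∈ Ico n hi, (a s - a t) := by
    simp only [gapVec, map_sub, map_smul, smul_eq_mul,
      coordForm_prefixVec_sub a hlon.le (hnhi.le.trans hk), coordForm_prefixVec_sub a hnhi.le hk,
      sum_sub_distrib, sum_const, nsmul_eq_mul, hcard hlon.le, hcard hnhi.le, mul_sum]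
  rw [hdouble]
  exact sum_neg (fun s hs => sum_neg (fun t ht => sub_neg.2 (ha (by simp_all; omega)))
    ⟨n, by simp [hnhi]⟩) ⟨lo, by simp [hlon]⟩

end Gap

section ProjectionOfPrefix

variable {k : ℕ} {M : Set ℕ} {lo n hi : ℕ}

local notation "W" M => Submodule.span ℝ (prefixVec k '' M)

lemma starProjection_prefixVec_eq_smul_gapVec (hM : ∀ m ∈ M, m ≤ k ∧ (m ≤ lo ∨ hi ≤ m))
    (hlo : prefixVec k lo ∈ W M) (hhi : prefixVec k hi ∈ W M) (hlon : lo < n) (hnhi : n < hi) :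
    (W M)ᗮ.starProjection (prefixVec k n) = ((hi : ℝ) - lo)⁻¹ • gapVec k lo n hi := by
  have hc : (hi : ℝ) - lo ≠ 0 := sub_ne_zero.2 (by exact_mod_cast (hlon.trans hnhi).ne')
  apply starProjection_orthogonal_eq_of
  · refine Submodule.smul_mem _ _ (mem_orthogonal_span_of ?_)
    rintro _ ⟨m, hm, rfl⟩
    exact inner_prefixVec_gapVec (hM m hm).1 hlon.le hnhi.le (hM m hm).2
  · rw [show prefixVec k n - ((hi : ℝ) - lo)⁻¹ • gapVec k lo n hi =
        ((hi : ℝ) - lo)⁻¹ • (((hi : ℝ) - lo) • prefixVec k n - gapVec k lo n hi) by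
      rw [smul_sub, smul_smul, inv_mul_cancel₀ hc, one_smul], smul_prefixVec_sub_gapVec]
    exact Submodule.smul_mem _ _ (add_mem (Submodule.smul_mem _ _ hlo) (Submodule.smul_mem _ _ hhi))

lemma starProjection_prefixVec_eq_sub (hM : ∀ m ∈ M, m ≤ k ∧ m ≤ lo)
    (hlo : prefixVec k lo ∈ W M) (hlon : lo ≤ n) :
    (W M)ᗮ.starProjection (prefixVec k n) = prefixVec k n - prefixVec k lo := by
  apply starProjection_orthogonal_eq_of
  · refine mem_orthogonal_span_of ?_
    rintro _ ⟨m, hm, rfl⟩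
    exact inner_prefixVec_sub_of_le (hM m hm).1 (hM m hm).2 hlon
  · simpa using hlo

lemma coordForm_starProjection_prefixVec_neg {a : ℕ → ℝ} (ha : StrictMono a)
    (hneg : ∀ i, a i < 0) (hM : ∀ m ∈ M, m ≤ k) {j : ℕ} (hjk : j + 1 ≤ k) (hjM : j + 1 ∉ M) :
    coordForm a k ((W M)ᗮ.starProjection (prefixVec k (j + 1))) < 0 := by
  classical
  have hgen : ∀ m ∈ M, prefixVec k m ∈ W M := fun m hm => Submodule.subset_span ⟨m, hm, rfl⟩
  -- `lo` and `Nat.find hup` are the cuts of `M ∪ {0}` nearest to `j + 1` from below and above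
  set lo := Nat.findGreatest (fun m => prefixVec k m ∈ W M) j
  have hlo : prefixVec k lo ∈ W M :=
    Nat.findGreatest_spec (P := fun m => prefixVec k m ∈ W M) (Nat.zero_le j)
      (by rw [prefixVec_zero]; exact zero_mem _)
  have hlo_le : lo ≤ j := Nat.findGreatest_le j
  have hbelow : ∀ m ∈ M, m ≤ j → m ≤ lo := fun m hm hmj => Nat.le_findGreatest hmj (hgen m hm)
  by_cases hup : ∃ m, j + 1 < m ∧ m ≤ k ∧ prefixVec k m ∈ W M
  · obtain ⟨hj_hi, hhi_k, hhi⟩ := Nat.find_spec hup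
    have habove : ∀ m ∈ M, j + 1 < m → Nat.find hup ≤ m := fun m hm hjm =>
      Nat.find_min' hup ⟨hjm, hM m hm, hgen m hm⟩
    have hgap : ∀ m ∈ M, m ≤ k ∧ (m ≤ lo ∨ Nat.find hup ≤ m) := fun m hm => ⟨hM m hm, by
      rcases lt_trichotomy m (j + 1) with h | rfl | h
      · exact Or.inl (hbelow m hm (by omega))
      · exact absurd hm hjM
      · exact Or.inr (habove m hm h)⟩
    rw [starProjection_prefixVec_eq_smul_gapVec hgap hlo hhi (by omega) hj_hi, map_smul,
      smul_eq_mul]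
    refine mul_neg_of_pos_of_neg (inv_pos.2 (sub_pos.2 ?_)) (coordForm_gapVec_neg ha
      (by omega) hj_hi hhi_k)
    exact_mod_cast (by omega : lo < Nat.find hup)
  · push Not at hup
    have hgap : ∀ m ∈ M, m ≤ k ∧ m ≤ lo := fun m hm => ⟨hM m hm, hbelow m hm (by
      have hmj : m ≠ j + 1 := fun h => hjM (h ▸ hm)
      by_contra h
      exact hup m (by omega) (hM m hm) (hgen m hm))⟩
    rw [starProjection_prefixVec_eq_sub hgap hlo (by omega),
      coordForm_prefixVec_sub a (by omega) hjk]
    exact sum_neg (fun s _ => hneg s) ⟨j, by simp [hlo_le]⟩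

end ProjectionOfPrefix

section ChenFamily

variable {k : ℕ} {a : ℕ → ℝ}

lemma coordForm_chenGen_neg (hneg : ∀ i, a i < 0) (i : Fin k) :
    coordForm a k (chenGen k i) < 0 := by
  rw [chenGen_eq_prefixVec, coordForm_prefixVec a i.isLt]
  exact sum_neg (fun s _ => hneg s) ⟨0, by simp⟩

lemma coordForm_neg_of_mem_chenCone (hneg : ∀ i, a i < 0) {x : EuclideanSpace ℝ (Fin k)}
    (hx : x ∈ chenCone k) (hx0 : x ≠ 0) : coordForm a k x < 0 :=
  map_neg_of_mem_polyCone (φ := LinearMap.id) (fun i => Or.inr (coordForm_chenGen_neg hneg i))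
    hx hx0

lemma coordForm_neg_of_mem_tCone (ha : StrictMono a) (hneg : ∀ i, a i < 0)
    {F : Set (EuclideanSpace ℝ (Fin k))} (hF : IsFace (chenCone k) F)
    {x : EuclideanSpace ℝ (Fin k)} (hx : x ∈ tCone (chenCone k) F) (hx0 : x ≠ 0) :
    coordForm a k x < 0 := by
  obtain ⟨ℓ, hℓ, rfl⟩ := hF
  obtain ⟨y, hy, rfl⟩ := hx
  have hspan : Submodule.span ℝ {x ∈ chenCone k | ℓ x = 0} = Submodule.span ℝ
      (prefixVec k '' ((fun i : Fin k => (i : ℕ) + 1) '' {i | ℓ (chenGen k i) = 0})) := by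
    rw [chenCone, span_face_polyCone hℓ, Set.image_image]
    simp only [chenGen_eq_prefixVec]
  refine map_neg_of_mem_polyCone (φ := (Submodule.span ℝ _)ᗮ.starProjection.toLinearMap)
    (fun i => ?_) hy hx0
  by_cases hi : ℓ (chenGen k i) = 0
  · exact Or.inl (Submodule.starProjection_orthogonal_apply_eq_zero
      (Submodule.subset_span ⟨generator_mem_polyCone i, hi⟩))
  · refine Or.inr ?_
    rw [ContinuousLinearMap.coe_coe, hspan, chenGen_eq_prefixVec]
    refine coordForm_starProjection_prefixVec_neg ha hneg ?_ i.isLt ?_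
    · rintro _ ⟨t, -, rfl⟩
      exact t.isLt
    · rintro ⟨t, ht, htj⟩
      exact hi (Fin.ext (Nat.succ_injective htj) ▸ ht)

end ChenFamily

section Forward

variable {a : ℕ → ℝ}

lemma neg_of_coordForm_neg_on_tCone {i : ℕ}
    (hT : ∀ F, IsFace (chenCone (i + 1)) F → ∀ x ∈ tCone (chenCone (i + 1)) F, x ≠ 0 →
      coordForm a (i + 1) x < 0) : a i < 0 := by
  set j := Fin.last i
  set ℓ := -(EuclideanSpace.proj j : EuclideanSpace ℝ (Fin (i + 1)) →L[ℝ] ℝ).toLinearMap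
  have hℓ : ∀ t, ℓ (chenGen (i + 1) t) ≤ 0 := fun t => by
    simp only [ℓ, LinearMap.neg_apply, ContinuousLinearMap.coe_coe, PiLp.proj_apply,
      chenGen_eq_prefixVec, prefixVec_apply, Left.neg_nonpos_iff]
    split_ifs <;> norm_num
  have hmem : EuclideanSpace.single j 1 ∈
      tCone (chenCone (i + 1)) {x ∈ chenCone (i + 1) | ℓ x = 0} := by
    refine mem_tCone_of (generator_mem_polyCone j) (mem_orthogonal_span_of ?_) ?_
    · rintro w ⟨-, hw⟩
      simpa [ℓ, EuclideanSpace.inner_single_right] using hw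
    · have : chenGen (i + 1) j - EuclideanSpace.single j 1 = prefixVec (i + 1) i := by
        ext s
        simp only [PiLp.sub_apply, chenGen_eq_prefixVec, prefixVec_apply, PiLp.single_apply, j,
          Fin.ext_iff, Fin.val_last]
        have := s.isLt
        split_ifs <;> first | omega | norm_num
      rw [this]
      exact Submodule.subset_span ⟨prefixVec_mem_chenCone (by omega), by simp [ℓ, j]⟩
  simpa [coordForm_single, j] using hT _ (isFace_polyCone_of_nonpos hℓ) _ hmem (by simp)

lemma lt_succ_of_coordForm_neg_on_tCone {i : ℕ}
    (hT : ∀ F, IsFace (chenCone (i + 2)) F → ∀ x ∈ tCone (chenCone (i + 2)) F, x ≠ 0 →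
      coordForm a (i + 2) x < 0) : a i < a (i + 1) := by
  set j₁ : Fin (i + 2) := ⟨i, by omega⟩
  set j₂ : Fin (i + 2) := ⟨i + 1, by omega⟩
  set ℓ := ((EuclideanSpace.proj j₂ : EuclideanSpace ℝ (Fin (i + 2)) →L[ℝ] ℝ) -
    EuclideanSpace.proj j₁).toLinearMap
  have hℓ : ∀ t, ℓ (chenGen (i + 2) t) ≤ 0 := fun t => by
    simp only [ℓ, ContinuousLinearMap.toLinearMap_sub, LinearMap.sub_apply,
      ContinuousLinearMap.coe_coe, PiLp.proj_apply, chenGen_eq_prefixVec, prefixVec_apply, j₁, j₂]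
    split_ifs <;> first | omega | norm_num
  set u : EuclideanSpace ℝ (Fin (i + 2)) :=
    (2⁻¹ : ℝ) • (EuclideanSpace.single j₁ 1 - EuclideanSpace.single j₂ 1)
  have hmem : u ∈ tCone (chenCone (i + 2)) {x ∈ chenCone (i + 2) | ℓ x = 0} := by
    refine mem_tCone_of (generator_mem_polyCone j₁) (mem_orthogonal_span_of ?_) ?_
    · rintro w ⟨-, hw⟩
      simp only [ℓ, u, ContinuousLinearMap.toLinearMap_sub, LinearMap.sub_apply,
        ContinuousLinearMap.coe_coe, PiLp.proj_apply, inner_smul_right, inner_sub_right,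
        EuclideanSpace.inner_single_right] at hw ⊢
      simp [sub_eq_zero.1 hw]
    · have : chenGen (i + 2) j₁ - u =
          (2⁻¹ : ℝ) • (prefixVec (i + 2) i + prefixVec (i + 2) (i + 2)) := by
        ext s
        simp only [PiLp.sub_apply, PiLp.add_apply, PiLp.smul_apply, smul_eq_mul, u,
          chenGen_eq_prefixVec, prefixVec_apply, PiLp.single_apply, j₁, j₂, Fin.ext_iff]
        have := s.isLt
        split_ifs <;> first | omega | norm_num
      rw [this]
      refine Submodule.smul_mem _ _ (add_mem (Submodule.subset_span ⟨prefixVec_mem_chenCone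
        (by omega), by simp [ℓ, j₁, j₂]⟩) (Submodule.subset_span ⟨prefixVec_mem_chenCone le_rfl,
        by simp [ℓ, j₁, j₂]⟩))
  have hu0 : u ≠ 0 := fun h => by simpa [u, PiLp.single_apply, j₁, j₂] using congrArg (· j₁) h
  have := hT _ (isFace_polyCone_of_nonpos hℓ) u hmem hu0
  rw [map_smul, map_sub, coordForm_single, coordForm_single, smul_eq_mul] at this
  linarith

end Forward

/-- a linear form `α = Σ aᵢ eᵢ*` is strictly negative on all nonzero
elements of every Chen cone, every face of a Chen cone, and every transverse cone to a
face of a Chen cone, if and only if `a₁ < a₂ < ⋯ < 0`. -/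
theorem linear_form_negative_on_chenFamily_iff (a : ℕ → ℝ) :
    (∀ (k : ℕ), ∀ S ∈ chenFamily k, ∀ x ∈ S, x ≠ 0 →
        ∑ i : Fin k, a (i : ℕ) * x i < 0) ↔
      ((∀ i : ℕ, a i < a (i + 1)) ∧ ∀ i : ℕ, a i < 0) := by
  simp only [← coordForm_apply]
  constructor
  · intro H
    have hT : ∀ k F, IsFace (chenCone k) F → ∀ x ∈ tCone (chenCone k) F, x ≠ 0 →
        coordForm a k x < 0 := fun k F hF => H k _ (Or.inr ⟨F, hF, rfl⟩)
    exact ⟨fun i => lt_succ_of_coordForm_neg_on_tCone (hT _),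
      fun i => neg_of_coordForm_neg_on_tCone (hT _)⟩
  · rintro ⟨hmono, hneg⟩ k S hS x hx hx0
    rcases hS with ⟨ℓ, -, rfl⟩ | ⟨F, hF, rfl⟩
    · exact coordForm_neg_of_mem_chenCone hneg hx.1 hx0
    · exact coordForm_neg_of_mem_tCone (strictMono_nat_of_lt_succ hmono) hneg hF hx hx0
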